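/- With B, C, E, S_B, S_C, φ_B, φ_C as in the setup of a separability idempotent (E idempotent in B ⊗ C, E(b⊗1) = E(1⊗S_B(b)), (1⊗c)E = (S_C(c)⊗1)E, (φ_B⊗id)E = 1, (id⊗φ_C)E = 1, and φ_B faithful), for any linear functional g on B the element y' = (id ⊗ (g ∘ S_B⁻¹))(E) satisfies g(b) = φ_B(y'b) for all b ∈ B; consequently, every linear functional on B is of the form φ_B(y' ·) for some y' ∈ B. -/

import Mathlib

open TensorProduct

/-- `(f ⊗ id)(E)` for a functional `f` on `B`. -/
noncomputable def lTens {B C : Type*} [AddCommGroup B] [Module ℂ B]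
    [AddCommGroup C] [Module ℂ C] (f : B →ₗ[ℂ] ℂ) :
    B ⊗[ℂ] C →ₗ[ℂ] C :=
  (TensorProduct.lid ℂ C).toLinearMap ∘ₗ TensorProduct.map f LinearMap.id

/-- `(id ⊗ g)(E)` for a functional `g` on `C`. -/
noncomputable def rTens {B C : Type*} [AddCommGroup B] [Module ℂ B]
    [AddCommGroup C] [Module ℂ C] (g : C →ₗ[ℂ] ℂ) :
    B ⊗[ℂ] C →ₗ[ℂ] B :=
  (TensorProduct.rid ℂ B).toLinearMap ∘ₗ TensorProduct.map LinearMap.id g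

/-!
Since `(φ_B ⊗ id)(E) = 1`, we have `S_B b = (φ_B ⊗ id)(E (1 ⊗ S_B b)) = (φ_B ⊗ id)(E (b ⊗ 1))`.
Applying `g ∘ S_B⁻¹` and exchanging the order of the two slice maps turns this into
`g b = φ_B ((id ⊗ g ∘ S_B⁻¹)(E) b)`.
-/

section SliceMaps

variable {B C : Type*}

theorem apply_rTens_eq_apply_lTens [AddCommGroup B] [Module ℂ B] [AddCommGroup C] [Module ℂ C]
    (f : B →ₗ[ℂ] ℂ) (h : C →ₗ[ℂ] ℂ) (t : B ⊗[ℂ] C) :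
    f (rTens h t) = h (lTens f t) := by
  induction t using TensorProduct.induction_on with
  | zero => simp
  | tmul x y => simp [rTens, lTens, mul_comm]
  | add s t hs ht => simp [hs, ht]

variable [Ring B] [Algebra ℂ B] [Ring C] [Algebra ℂ C]

theorem rTens_mul_tmul_one (h : C →ₗ[ℂ] ℂ) (t : B ⊗[ℂ] C) (b : B) :
    rTens h (t * (b ⊗ₜ[ℂ] (1 : C))) = rTens h t * b := by
  induction t using TensorProduct.induction_on with
  | zero => simp
  | tmul x y => simp [rTens, Algebra.TensorProduct.tmul_mul_tmul]
  | add s t hs ht => simp [add_mul, hs, ht]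

theorem lTens_mul_one_tmul (f : B →ₗ[ℂ] ℂ) (t : B ⊗[ℂ] C) (c : C) :
    lTens f (t * ((1 : B) ⊗ₜ[ℂ] c)) = lTens f t * c := by
  induction t using TensorProduct.induction_on with
  | zero => simp
  | tmul x y => simp [lTens, Algebra.TensorProduct.tmul_mul_tmul]
  | add s t hs ht => simp [add_mul, hs, ht]

end SliceMaps

theorem radon_nikodym_left_general
    {B C : Type*} [Ring B] [Algebra ℂ B] [Ring C] [Algebra ℂ C]
    (SB : B ≃ₗ[ℂ] C)
    (E : B ⊗[ℂ] C)
    (hE1 : ∀ b : B, E * (b ⊗ₜ[ℂ] (1 : C)) = E * ((1 : B) ⊗ₜ[ℂ] SB b))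
    (φB : B →ₗ[ℂ] ℂ)
    (hφB : lTens φB E = 1)
    (g : B →ₗ[ℂ] ℂ) :
    (∀ b : B, g b = φB (rTens (g ∘ₗ (SB.symm : C →ₗ[ℂ] B)) E * b)) ∧
    (∃ y' : B, ∀ b : B, g b = φB (y' * b)) := by
  set h : C →ₗ[ℂ] ℂ := g ∘ₗ (SB.symm : C →ₗ[ℂ] B)
  have key : ∀ b : B, g b = φB (rTens h E * b) := fun b =>
    calc g b = h (lTens φB E * SB b) := by simp [h, hφB]
      _ = h (lTens φB (E * (b ⊗ₜ[ℂ] (1 : C)))) := by rw [hE1, lTens_mul_one_tmul]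
      _ = φB (rTens h E * b) := by rw [← apply_rTens_eq_apply_lTens, rTens_mul_tmul_one]
  exact ⟨key, rTens h E, key⟩

/-- For any functional `g` on `B`, the element `y' = (id ⊗ g∘S_B⁻¹)(E)`
satisfies `g(b) = φ_B(y' b)`; consequently every functional on `B` has the form
`φ_B(y' ·)`. -/
theorem radon_nikodym_left
    {B C : Type*} [Ring B] [Algebra ℂ B] [Ring C] [Algebra ℂ C]
    [FiniteDimensional ℂ B] [FiniteDimensional ℂ C]
    (SB : B ≃ₗ[ℂ] C) (SC : C →ₗ[ℂ] B)
    (hSBanti : ∀ a b : B, SB (a * b) = SB b * SB a)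
    (hSCanti : ∀ a b : C, SC (a * b) = SC b * SC a)
    (hSCbij : Function.Bijective SC)
    (E : B ⊗[ℂ] C)
    (hEidem : E * E = E)
    (hE1 : ∀ b : B, E * (b ⊗ₜ[ℂ] (1 : C)) = E * ((1 : B) ⊗ₜ[ℂ] SB b))
    (hE2 : ∀ c : C, ((1 : B) ⊗ₜ[ℂ] c) * E = (SC c ⊗ₜ[ℂ] (1 : C)) * E)
    (φB : B →ₗ[ℂ] ℂ) (φC : C →ₗ[ℂ] ℂ)
    (hφB : lTens φB E = 1) (hφC : rTens φC E = 1)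
    (hφBfaith_l : ∀ a : B, (∀ b : B, φB (a * b) = 0) → a = 0)
    (hφBfaith_r : ∀ a : B, (∀ b : B, φB (b * a) = 0) → a = 0)
    (g : B →ₗ[ℂ] ℂ) :
    (∀ b : B, g b = φB (rTens (g ∘ₗ (SB.symm : C →ₗ[ℂ] B)) E * b)) ∧
    (∃ y' : B, ∀ b : B, g b = φB (y' * b)) :=
  radon_nikodym_left_general SB E hE1 φB hφB g
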